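/- arXiv:math/0507260 — 6 statements merged into one kernel-verified Lean document; each statement's English description precedes it below -/
import Mathlib

section
/- Let F be a free group of finite rank n with basis x_1, …, x_n, and let k ≥ 2. If φ is an endomorphism of F such that φ(x_i) x_i⁻¹ ∈ Γ^k F for all i, then for every g ∈ Γ^k F one has φ(g) ≡ g mod Γ^{2k-1} F; that is, φ acts trivially on the quotient (Γ^k F)/(Γ^{2k-1} F). -/
/-!
Write `Γ_i` for the `i`-th term of the lower central series (Mathlib's indexing, `Γ_0 = G`).
If an endomorphism `φ` moves every generator only by an element of `Γ_a`, then it moves every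
element of `Γ_m` only by an element of `Γ_{m+a}`. The set of elements moved by `φ` only modulo a
normal subgroup is a subgroup, so by induction on `m` it suffices to treat a commutator `⁅x, y⁆`
with `x ∈ Γ_m`: writing `φ x = u x` and `φ y = v y`, the defect `⁅u x, v y⁆ ⁅x, y⁆⁻¹` is a product of
conjugates of `⁅x, v⁆`, `⁅u v, ⁅x, y⁆⁆` and `⁅u, v y⁆`, all of which lie in `Γ_{m+a+1}` because
`⁅Γ_i, Γ_j⁆ ≤ Γ_{i+j+1}` (a consequence of the three subgroups lemma).
-/

open Subgroup
open scoped commutatorElement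

namespace Subgroup

variable {G : Type*} [Group G]

theorem commutator_commutator_le_of_rotate {H₁ H₂ H₃ N : Subgroup G} [N.Normal]
    (h₁ : ⁅⁅H₂, H₃⁆, H₁⁆ ≤ N) (h₂ : ⁅⁅H₃, H₁⁆, H₂⁆ ≤ N) : ⁅⁅H₁, H₂⁆, H₃⁆ ≤ N := by
  rw [← QuotientGroup.ker_mk' N, ← map_eq_bot_iff, map_commutator, map_commutator] at h₁ h₂ ⊢
  exact commutator_commutator_eq_bot_of_rotate h₁ h₂

theorem commutator_lowerCentralSeries_le (i j : ℕ) :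
    ⁅(⊤ : Subgroup G).lowerCentralSeries i, (⊤ : Subgroup G).lowerCentralSeries j⁆ ≤
      (⊤ : Subgroup G).lowerCentralSeries (i + j + 1) := by
  induction j generalizing i with
  | zero => exact le_rfl
  | succ j ih =>
    rw [lowerCentralSeries_succ, commutator_comm]
    refine commutator_commutator_le_of_rotate ?_ ?_
    · rw [commutator_comm ⊤, ← lowerCentralSeries_succ]
      convert ih (i + 1) using 2
      omega
    · exact commutator_mono (ih i) le_rfl

end Subgroup

section

variable {G : Type*} [Group G]

theorem commutatorElement_mul_mul_mul_inv (u x v y : G) :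
    ⁅u * x, v * y⁆ * ⁅x, y⁆⁻¹ =
      u * ⁅x, v⁆ * u⁻¹ * ⁅u * v, ⁅x, y⁆⁆ * (⁅x, y⁆ * ⁅u, v * y⁆ * ⁅x, y⁆⁻¹) := by
  simp only [commutatorElement_def]
  group

namespace MonoidHom

def fixedModulo (φ : G →* G) (N : Subgroup G) [N.Normal] : Subgroup G :=
  ((QuotientGroup.mk' N).comp φ).eqLocus (QuotientGroup.mk' N)

theorem mem_fixedModulo {φ : G →* G} {N : Subgroup G} [N.Normal] {g : G} :
    g ∈ φ.fixedModulo N ↔ φ g * g⁻¹ ∈ N := by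
  change ((φ g : G ⧸ N) = g) ↔ _
  rw [QuotientGroup.eq_iff_div_mem, div_eq_mul_inv]

theorem fixedModulo_eq_top_of_closure_eq_top {φ : G →* G} {N : Subgroup G} [N.Normal]
    {S : Set G} (hS : closure S = ⊤) (hφ : S ⊆ φ.fixedModulo N) : φ.fixedModulo N = ⊤ := by
  rw [eq_top_iff, ← hS]
  exact (closure_le _).2 hφ

theorem commutatorElement_mem_fixedModulo_lowerCentralSeries {φ : G →* G} {a m : ℕ}
    (hφ : φ.fixedModulo ((⊤ : Subgroup G).lowerCentralSeries a) = ⊤) {x : G}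
    (hx : x ∈ (⊤ : Subgroup G).lowerCentralSeries m)
    (hφx : x ∈ φ.fixedModulo ((⊤ : Subgroup G).lowerCentralSeries (m + a))) (y : G) :
    ⁅x, y⁆ ∈ φ.fixedModulo ((⊤ : Subgroup G).lowerCentralSeries (m + a + 1)) := by
  set Γ := (⊤ : Subgroup G).lowerCentralSeries
  obtain ⟨u, hu, hφx⟩ : ∃ u ∈ Γ (m + a), φ x = u * x :=
    ⟨_, mem_fixedModulo.1 hφx, by group⟩
  obtain ⟨v, hv, hφy⟩ : ∃ v ∈ Γ a, φ y = v * y :=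
    ⟨_, mem_fixedModulo.1 (hφ ▸ mem_top y), by group⟩
  have hxy : ⁅x, y⁆ ∈ Γ (m + 1) := commutator_mem_commutator hx (mem_top y)
  have huv : u * v ∈ Γ a := mul_mem (Subgroup.lowerCentralSeries_antitone _ (by omega) hu) hv
  have h₁ : ⁅x, v⁆ ∈ Γ (m + a + 1) :=
    commutator_lowerCentralSeries_le m a (commutator_mem_commutator hx hv)
  have h₂ : ⁅u * v, ⁅x, y⁆⁆ ∈ Γ (m + a + 1) :=
    Subgroup.lowerCentralSeries_antitone _ (by omega)
      (commutator_lowerCentralSeries_le a (m + 1) (commutator_mem_commutator huv hxy))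
  have h₃ : ⁅u, v * y⁆ ∈ Γ (m + a + 1) := commutator_mem_commutator hu (mem_top _)
  rw [mem_fixedModulo, map_commutatorElement, hφx, hφy, commutatorElement_mul_mul_mul_inv]
  exact mul_mem (mul_mem (Normal.conj_mem inferInstance _ h₁ u) h₂)
    (Normal.conj_mem inferInstance _ h₃ _)

theorem lowerCentralSeries_le_fixedModulo {φ : G →* G} {a : ℕ}
    (hφ : φ.fixedModulo ((⊤ : Subgroup G).lowerCentralSeries a) = ⊤) (m : ℕ) :
    (⊤ : Subgroup G).lowerCentralSeries m ≤
      φ.fixedModulo ((⊤ : Subgroup G).lowerCentralSeries (m + a)) := by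
  induction m with
  | zero => simp [hφ]
  | succ m ih =>
    rw [Subgroup.lowerCentralSeries_succ, commutator_le, Nat.add_right_comm]
    exact fun x hx y _ => commutatorElement_mem_fixedModulo_lowerCentralSeries hφ hx (ih hx) y

end MonoidHom

end

theorem endo_acts_trivially_on_lcs_quotient_general (n k : ℕ)
    (φ : FreeGroup (Fin n) →* FreeGroup (Fin n))
    (hφ : ∀ i : Fin n,
      φ (FreeGroup.of i) * (FreeGroup.of i)⁻¹ ∈ (⊤ : Subgroup (FreeGroup (Fin n))).lowerCentralSeries (k - 1)) :
    ∀ g ∈ (⊤ : Subgroup (FreeGroup (Fin n))).lowerCentralSeries (k - 1),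
      φ g * g⁻¹ ∈ (⊤ : Subgroup (FreeGroup (Fin n))).lowerCentralSeries (2 * k - 2) := by
  have hgen := MonoidHom.fixedModulo_eq_top_of_closure_eq_top (FreeGroup.closure_range_of _)
    (Set.range_subset_iff.2 fun i => MonoidHom.mem_fixedModulo.2 (hφ i))
  intro g hg
  have hfix := MonoidHom.lowerCentralSeries_le_fixedModulo hgen (k - 1) hg
  rwa [MonoidHom.mem_fixedModulo, show k - 1 + (k - 1) = 2 * k - 2 by omega] at hfix

/-- Let `F` be a free group of finite rank `n` and `k ≥ 2`
(`Γ^k F = lowerCentralSeries F (k-1)` in Mathlib's indexing).  If `φ` is an endomorphism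
of `F` with `φ(x_i) x_i⁻¹ ∈ Γ^k F` for every generator `x_i`, then for every `g ∈ Γ^k F`
one has `φ(g) ≡ g mod Γ^{2k-1} F`, i.e. `φ` acts trivially on `(Γ^k F)/(Γ^{2k-1} F)`. -/
theorem endo_acts_trivially_on_lcs_quotient (n k : ℕ) (hk : 2 ≤ k)
    (φ : FreeGroup (Fin n) →* FreeGroup (Fin n))
    (hφ : ∀ i : Fin n,
      φ (FreeGroup.of i) * (FreeGroup.of i)⁻¹ ∈ (⊤ : Subgroup (FreeGroup (Fin n))).lowerCentralSeries (k - 1)) :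
    ∀ g ∈ (⊤ : Subgroup (FreeGroup (Fin n))).lowerCentralSeries (k - 1),
      φ g * g⁻¹ ∈ (⊤ : Subgroup (FreeGroup (Fin n))).lowerCentralSeries (2 * k - 2) :=
  endo_acts_trivially_on_lcs_quotient_general n k φ hφ
end

section
/- Let F be a free group of finite rank n and k ≥ 2. The kernel of the natural map Aut(F/Γ^{k+1}F) → Aut(F/Γ^k F) is isomorphic, as a group, to Hom(H₁(F), (Γ^k F)/(Γ^{k+1} F)), via the map sending f in the kernel to the homomorphism (x ↦ f̃(x) x⁻¹ mod Γ^{k+1} F), where f̃ is any lift of f to an endomorphism of F. -/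
/-!
Write `N = F/Γ^{k+1}F` and `Q̄` for the image of `Γ^k F` in `N`. Since `⁅Γ^k F, F⁆ ⊆ Γ^{k+1}F`,
`Q̄` is central, so for `f` in the kernel the displacement `y ↦ f(y) y⁻¹` is a homomorphism into
an abelian group. It therefore kills commutators, hence kills `Q̄`, which lies in `[N, N]` as
`k ≥ 2`: `f` fixes `Q̄` pointwise, which is what makes `f ↦ f(y) y⁻¹` multiplicative. Conversely, a
homomorphism `c : F → Q̄` killing commutators descends to `d : N → Q̄` with `d ∘ d = 1`, and then
`y ↦ d(y) y` is an automorphism with inverse `y ↦ d(y)⁻¹ y`.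
-/

open scoped commutatorElement
open Subgroup

namespace MulAut

variable {P : Type*} [Group P]

def centralDisplacement (f : MulAut P) (hf : ∀ y, f y * y⁻¹ ∈ center P) : P →* P where
  toFun y := f y * y⁻¹
  map_one' := by simp
  map_mul' x y := by
    have hx : x⁻¹ * (f y * y⁻¹) = f y * y⁻¹ * x⁻¹ := mem_center_iff.mp (hf y) x⁻¹
    calc f (x * y) * (x * y)⁻¹ = f x * (x⁻¹ * (f y * y⁻¹)) := by rw [hx, map_mul]; group
      _ = f x * x⁻¹ * (f y * y⁻¹) := by group

theorem mul_apply_mul_inv {f g : MulAut P} (hg : ∀ y, g y * y⁻¹ ∈ center P)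
    (hfg : ∀ y, f (g y * y⁻¹) = g y * y⁻¹) (y : P) :
    (f * g) y * y⁻¹ = f y * y⁻¹ * (g y * y⁻¹) :=
  calc (f * g) y * y⁻¹ = f (g y * y⁻¹ * y) * y⁻¹ := by rw [mul_apply, inv_mul_cancel_right]
    _ = g y * y⁻¹ * (f y * y⁻¹) := by rw [map_mul, hfg, mul_assoc]
    _ = f y * y⁻¹ * (g y * y⁻¹) := (mem_center_iff.mp (hg y) _).symm

def ofCentralHom (d : P →* P) (hd : ∀ y, d y ∈ center P) (hdd : ∀ y, d (d y) = 1) :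
    MulAut P where
  toFun y := d y * y
  invFun y := (d y)⁻¹ * y
  left_inv y := by simp [hdd]
  right_inv y := by simp [hdd]
  map_mul' x y := by
    have hx : x * d y = d y * x := mem_center_iff.mp (hd y) x
    simp only [map_mul]
    rw [mul_assoc, ← mul_assoc (d y), ← hx]
    group

theorem ofCentralHom_apply (d : P →* P) (hd : ∀ y, d y ∈ center P) (hdd : ∀ y, d (d y) = 1)
    (y : P) : ofCentralHom d hd hdd y = d y * y :=
  rfl

end MulAut

section LowerCentralSeries

variable {G H : Type*} [Group G] [Group H]

theorem map_commutatorElement_eq_one_of_mem_center (c : G →* H) (hc : ∀ x, c x ∈ center H)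
    (x y : G) : c ⁅x, y⁆ = 1 := by
  rw [map_commutatorElement, commutatorElement_eq_one_iff_mul_comm]
  exact mem_center_iff.mp (hc y) (c x)

theorem lowerCentralSeries_le_ker (c : G →* H) (hc : ∀ x y : G, c ⁅x, y⁆ = 1) {m : ℕ}
    (hm : 1 ≤ m) :
    (⊤ : Subgroup G).lowerCentralSeries m ≤ c.ker :=
  (Subgroup.lowerCentralSeries_antitone ⊤ hm).trans
    (commutator_le.mpr fun x _ y _ => hc x y : ⁅(⊤ : Subgroup G), ⊤⁆ ≤ c.ker)

theorem map_lowerCentralSeries_le_center (m : ℕ) :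
    ((⊤ : Subgroup G).lowerCentralSeries m).map
        (QuotientGroup.mk' ((⊤ : Subgroup G).lowerCentralSeries (m + 1))) ≤
      center (G ⧸ (⊤ : Subgroup G).lowerCentralSeries (m + 1)) := by
  rintro _ ⟨w, hw, rfl⟩
  refine mem_center_iff.mpr fun g => ?_
  induction g using QuotientGroup.induction_on with
  | H y =>
    exact (commutatorElement_eq_one_iff_mul_comm.mp <|
      (QuotientGroup.eq_one_iff ⁅w, y⁆).mpr (commutator_mem_commutator hw (mem_top y))).symm

theorem MulAut.apply_eq_self_of_mem_map_lowerCentralSeries {P : Type*} [Group P] (π : G →* P)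
    (f : MulAut P) (hf : ∀ y, f y * y⁻¹ ∈ center P) {m : ℕ} (hm : 1 ≤ m) {q : P}
    (hq : q ∈ ((⊤ : Subgroup G).lowerCentralSeries m).map π) : f q = q := by
  obtain ⟨w, hw, rfl⟩ := hq
  exact mul_inv_eq_one.mp <| lowerCentralSeries_le_ker ((f.centralDisplacement hf).comp π)
    (map_commutatorElement_eq_one_of_mem_center _ fun x => hf (π x)) hm hw

theorem exists_mulAut_apply_mk_eq_mul {m : ℕ} (hm : 1 ≤ m)
    (c : G →* G ⧸ (⊤ : Subgroup G).lowerCentralSeries (m + 1))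
    (hcQ : ∀ x, c x ∈ ((⊤ : Subgroup G).lowerCentralSeries m).map
      (QuotientGroup.mk' ((⊤ : Subgroup G).lowerCentralSeries (m + 1))))
    (hc : ∀ x y : G, c ⁅x, y⁆ = 1) :
    ∃ f : MulAut (G ⧸ (⊤ : Subgroup G).lowerCentralSeries (m + 1)), ∀ x : G, f x = c x * x := by
  set d := QuotientGroup.lift _ c (lowerCentralSeries_le_ker c hc (Nat.le_add_left 1 m))
  have hd_mk (x : G) : d x = c x := QuotientGroup.lift_mk _ _ x
  have hd_center (y) : d y ∈ center _ := by
    induction y using QuotientGroup.induction_on with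
    | H x => rw [hd_mk]; exact map_lowerCentralSeries_le_center m (hcQ x)
  have hdd (y) : d (d y) = 1 := by
    induction y using QuotientGroup.induction_on with
    | H x =>
      obtain ⟨w, hw, hwx⟩ := hcQ x
      rw [hd_mk, ← hwx, QuotientGroup.mk'_apply, hd_mk]
      exact lowerCentralSeries_le_ker c hc hm hw
  exact ⟨MulAut.ofCentralHom d hd_center hdd, fun x => by rw [MulAut.ofCentralHom_apply, hd_mk]⟩

end LowerCentralSeries

/-- Let `F` be free of rank `n`, `k ≥ 2`, `N_{k+1} = F/Γ^{k+1}F`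
(`Γ^{k+1} F = lowerCentralSeries F k` in Mathlib's indexing), and let
`Q̄ ⊆ N_{k+1}` be the image of `Γ^k F`, so that `N_k = N_{k+1}/Q̄`.  An
automorphism `f` of `N_{k+1}` lies in the kernel of `Aut N_{k+1} → Aut N_k`
exactly when `f(y) y⁻¹ ∈ Q̄` for all `y`.  The map `J` sending such an `f` to
`(x ↦ f(x̄) x̄⁻¹)` (equivalently, `x ↦ f̃(x) x⁻¹ mod Γ^{k+1}F` for any lift `f̃`)
identifies this kernel, as a group, with `Hom(H₁(F), (Γ^k F)/(Γ^{k+1} F))`: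
`J f` takes values in `Q̄`, is a homomorphism killing commutators (i.e. factors
through `H₁(F)`), `J` is injective, multiplicative, and hits every homomorphism
`F → Q̄` killing commutators. -/
theorem kernel_aut_iso_hom (n k : ℕ) (hk : 2 ≤ k) :
    ∀ (mk : FreeGroup (Fin n) →*
        (FreeGroup (Fin n) ⧸ (⊤ : Subgroup (FreeGroup (Fin n))).lowerCentralSeries k)),
    mk = QuotientGroup.mk' ((⊤ : Subgroup (FreeGroup (Fin n))).lowerCentralSeries k) →
    ∀ (Q : Subgroup (FreeGroup (Fin n) ⧸ (⊤ : Subgroup (FreeGroup (Fin n))).lowerCentralSeries k)),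
    Q = ((⊤ : Subgroup (FreeGroup (Fin n))).lowerCentralSeries (k - 1)).map mk →
    ∀ (InKer : (FreeGroup (Fin n) ⧸ (⊤ : Subgroup (FreeGroup (Fin n))).lowerCentralSeries k ≃*
        FreeGroup (Fin n) ⧸ (⊤ : Subgroup (FreeGroup (Fin n))).lowerCentralSeries k) → Prop),
    (∀ f, InKer f ↔ ∀ y, f y * y⁻¹ ∈ Q) →
    ∀ (J : (FreeGroup (Fin n) ⧸ (⊤ : Subgroup (FreeGroup (Fin n))).lowerCentralSeries k ≃*
        FreeGroup (Fin n) ⧸ (⊤ : Subgroup (FreeGroup (Fin n))).lowerCentralSeries k) →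
        FreeGroup (Fin n) →
        (FreeGroup (Fin n) ⧸ (⊤ : Subgroup (FreeGroup (Fin n))).lowerCentralSeries k)),
    (∀ f x, J f x = f (mk x) * (mk x)⁻¹) →
    -- values in Q̄ and homomorphism property killing commutators
    (∀ f, InKer f → (∀ x, J f x ∈ Q) ∧
        (∀ x y : FreeGroup (Fin n), J f (x * y) = J f x * J f y) ∧
        (∀ x y : FreeGroup (Fin n), J f ⁅x, y⁆ = 1)) ∧
    -- J is injective on the kernel
    (∀ f g, InKer f → InKer g → (∀ x, J f x = J g x) → f = g) ∧
    -- J is multiplicative (MulAut multiplication is composition)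
    (∀ f g, InKer f → InKer g → ∀ x, J (f * g) x = J f x * J g x) ∧
    -- J is surjective onto Hom(H₁(F), Q̄)
    (∀ c : FreeGroup (Fin n) →*
        (FreeGroup (Fin n) ⧸ (⊤ : Subgroup (FreeGroup (Fin n))).lowerCentralSeries k),
      (∀ x, c x ∈ Q) → (∀ x y : FreeGroup (Fin n), c ⁅x, y⁆ = 1) →
      ∃ f, InKer f ∧ ∀ x, J f x = c x) := by
  intro mk hmk Q hQ InKer hIn J hJ
  obtain ⟨m, rfl⟩ : ∃ m, k = m + 1 := ⟨k - 1, by omega⟩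
  have hm : 1 ≤ m := by omega
  rw [Nat.add_sub_cancel] at hQ
  subst hmk hQ
  have hcenter (f) (hf : InKer f) (y) : f y * y⁻¹ ∈ center _ :=
    map_lowerCentralSeries_le_center m ((hIn f).mp hf y)
  have hJ_comp (f) (hf : InKer f) (x) :
      J f x = ((MulAut.centralDisplacement f (hcenter f hf)).comp (QuotientGroup.mk' _)) x :=
    hJ f x
  refine ⟨fun f hf => ⟨fun x => hJ f x ▸ (hIn f).mp hf _, fun x y => ?_, fun x y => ?_⟩,
    fun f g _ _ hfg => ?_, fun f g hf hg x => ?_, fun c hcQ hc => ?_⟩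
  · rw [hJ_comp f hf, hJ_comp f hf, hJ_comp f hf, map_mul]
  · rw [hJ_comp f hf]
    exact map_commutatorElement_eq_one_of_mem_center _
      (fun x => hcenter f hf (QuotientGroup.mk' _ x)) x y
  · ext y
    induction y using QuotientGroup.induction_on with
    | H x => exact mul_right_cancel ((hJ f x).symm.trans ((hfg x).trans (hJ g x)))
  · simp only [hJ]
    exact MulAut.mul_apply_mul_inv (hcenter g hg) (fun y =>
      MulAut.apply_eq_self_of_mem_map_lowerCentralSeries _ f (hcenter f hf) hm ((hIn g).mp hg y)) _
  · obtain ⟨f, hf⟩ := exists_mulAut_apply_mk_eq_mul hm c hcQ hc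
    have hJf (x) : J f x = c x := by rw [hJ, QuotientGroup.mk'_apply, hf, mul_inv_cancel_right]
    refine ⟨f, (hIn f).mpr fun y => ?_, hJf⟩
    induction y using QuotientGroup.induction_on with
    | H x => simpa only [← hJf x, hJ, QuotientGroup.mk'_apply] using hcQ x
end

section
/- Let G be a group. If the abelianization G/[G,G] is an acyclically closed group and [G,G] is central in G (i.e., G is nilpotent of class ≤ 2), then G is acyclically closed. More generally, a central extension G of a group H is acyclically closed if and only if H is acyclically closed. -/
open Monoid

/-- The projection `G ∗ F_n → H₁(F_n)` killing `G`; a monomial is *acyclic*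
if it lies in its kernel. -/
def acyProj (G : Type*) [Group G] (n : ℕ) :
    Coprod G (FreeGroup (Fin n)) →* Abelianization (FreeGroup (Fin n)) :=
  Coprod.lift 1 Abelianization.of

/-- An *acyclic system* over `G`: equations `x_i = w_i(x_1,…,x_n)` with each
monomial `w_i ∈ G ∗ F_n` acyclic. -/
def IsAcyclicSystem {G : Type*} [Group G] {n : ℕ}
    (w : Fin n → Coprod G (FreeGroup (Fin n))) : Prop :=
  ∀ i, acyProj G n (w i) = 1

/-- Substitution of values `g : Fin n → G` for the variables in a monomial. -/
def acyEval {G : Type*} [Group G] {n : ℕ} (g : Fin n → G) :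
    Coprod G (FreeGroup (Fin n)) →* G :=
  Coprod.lift (MonoidHom.id G) (FreeGroup.lift g)

/-- `g` is a solution of the system `x_i = w_i`. -/
def IsSolution {G : Type*} [Group G] {n : ℕ}
    (w : Fin n → Coprod G (FreeGroup (Fin n))) (g : Fin n → G) : Prop :=
  ∀ i, acyEval g (w i) = g i

/-- A group is *acyclically closed* if every acyclic system over it has a
unique solution. -/
def AcyclicallyClosed (G : Type*) [Group G] : Prop :=
  ∀ (n : ℕ) (w : Fin n → Coprod G (FreeGroup (Fin n))),
    IsAcyclicSystem w → ∃! g : Fin n → G, IsSolution w g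

/-!
If `π : G → H` is surjective with central kernel, then substituting values that differ by
central elements into an acyclic monomial does not change its value: the discrepancy is a
homomorphism `G ∗ F_n → Z(G)` which kills `G` and factors through `H₁(F_n)`, where an acyclic
monomial vanishes. Hence a solution of the image system over `H` lifts (adjust an arbitrary
lift by the central error term), and two solutions over `G` with the same image coincide.
Conversely every acyclic system over `H` is the image of one over `G`, since `π` is onto.
-/

theorem Monoid.Coprod.map_surjective {M N M' N' : Type*} [Monoid M] [Monoid N] [Monoid M']
    [Monoid N'] {f : M →* M'} {g : N →* N'} (hf : Function.Surjective f)
    (hg : Function.Surjective g) : Function.Surjective (Coprod.map f g) := by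
  intro v
  induction v using Coprod.induction_on with
  | inl m => obtain ⟨a, rfl⟩ := hf m; exact ⟨Coprod.inl a, rfl⟩
  | inr n => obtain ⟨b, rfl⟩ := hg n; exact ⟨Coprod.inr b, rfl⟩
  | mul x y hx hy =>
    obtain ⟨a, rfl⟩ := hx
    obtain ⟨b, rfl⟩ := hy
    exact ⟨a * b, map_mul _ a b⟩

def MonoidHom.mulCenter {K G : Type*} [Monoid K] [Group G] (f : K →* G)
    (c : K →* Subgroup.center G) : K →* G where
  toFun x := f x * c x
  map_one' := by simp
  map_mul' x y := by
    have hc : f y * c x = c x * f y := Subgroup.mem_center_iff.mp (c x).2 (f y)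
    simp only [map_mul, Subgroup.coe_mul]
    rw [mul_assoc, ← mul_assoc (f y), hc, mul_assoc, mul_assoc]

section CentralExtension

variable {G H : Type*} [Group G] [Group H] {n : ℕ}

def mapSystem (π : G →* H) (w : Fin n → Coprod G (FreeGroup (Fin n))) :
    Fin n → Coprod H (FreeGroup (Fin n)) :=
  fun i => Coprod.map π (MonoidHom.id _) (w i)

open scoped IsMulCommutative in
theorem acyEval_mul_center (g : Fin n → G) (z : Fin n → Subgroup.center G) :
    acyEval (fun j => g j * z j) =
      (acyEval g).mulCenter ((Abelianization.lift (FreeGroup.lift z)).comp (acyProj G n)) := by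
  apply Coprod.hom_ext
  · ext a
    simp [acyEval, MonoidHom.mulCenter, acyProj]
  · ext j
    simp [acyEval, MonoidHom.mulCenter, acyProj]

theorem acyEval_mul_center_of_acyProj_eq_one (g : Fin n → G) (z : Fin n → Subgroup.center G)
    {w : Coprod G (FreeGroup (Fin n))} (hw : acyProj G n w = 1) :
    acyEval (fun j => g j * z j) w = acyEval g w := by
  rw [acyEval_mul_center]
  simp [MonoidHom.mulCenter, hw]

theorem acyProj_comp_map (π : G →* H) :
    (acyProj H n).comp (Coprod.map π (MonoidHom.id _)) = acyProj G n := by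
  apply Coprod.hom_ext
  · ext a; simp [acyProj]
  · ext j; simp [acyProj]

theorem acyEval_comp_map (π : G →* H) (g : Fin n → G) :
    (acyEval (π ∘ g)).comp (Coprod.map π (MonoidHom.id _)) = π.comp (acyEval g) := by
  apply Coprod.hom_ext
  · ext a; simp [acyEval]
  · ext j; simp [acyEval]

theorem isAcyclicSystem_mapSystem_iff (π : G →* H) {w : Fin n → Coprod G (FreeGroup (Fin n))} :
    IsAcyclicSystem (mapSystem π w) ↔ IsAcyclicSystem w := by
  simp only [IsAcyclicSystem, mapSystem, ← MonoidHom.comp_apply, acyProj_comp_map]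

theorem isSolution_mapSystem_iff (π : G →* H) {w : Fin n → Coprod G (FreeGroup (Fin n))}
    {g : Fin n → G} :
    IsSolution (mapSystem π w) (π ∘ g) ↔ ∀ i, π (acyEval g (w i)) = π (g i) := by
  simp only [IsSolution, mapSystem, ← MonoidHom.comp_apply, acyEval_comp_map, Function.comp_apply]

theorem IsSolution.mapSystem (π : G →* H) {w : Fin n → Coprod G (FreeGroup (Fin n))}
    {g : Fin n → G} (hg : IsSolution w g) : IsSolution (mapSystem π w) (π ∘ g) :=
  (isSolution_mapSystem_iff π).2 fun i => by rw [hg i]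

theorem exists_mapSystem_eq {π : G →* H} (hπ : Function.Surjective π)
    (v : Fin n → Coprod H (FreeGroup (Fin n))) : ∃ w, mapSystem π w = v :=
  ⟨fun i => Function.surjInv (Coprod.map_surjective hπ Function.surjective_id) (v i),
    funext fun i => Function.surjInv_eq _ (v i)⟩

variable {π : G →* H} (hc : π.ker ≤ Subgroup.center G)
  {w : Fin n → Coprod G (FreeGroup (Fin n))}
include hc

theorem exists_isSolution_of_isSolution_mapSystem (hπ : Function.Surjective π)
    (hw : IsAcyclicSystem w) {h : Fin n → H} (hh : IsSolution (mapSystem π w) h) :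
    ∃ g, IsSolution w g ∧ π ∘ g = h := by
  set g₀ : Fin n → G := fun i => Function.surjInv hπ (h i)
  have hg₀ : π ∘ g₀ = h := funext fun i => Function.surjInv_eq hπ (h i)
  -- `c i` measures how far the arbitrary lift `g₀` is from solving the `i`-th equation.
  set c : Fin n → G := fun i => (g₀ i)⁻¹ * acyEval g₀ (w i)
  have hc_ker (i : Fin n) : c i ∈ π.ker := by
    have := (isSolution_mapSystem_iff π).1 (hg₀ ▸ hh) i
    simp [c, MonoidHom.mem_ker, this]
  refine ⟨fun i => g₀ i * c i, fun i => ?_,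
    funext fun i => by simp [← hg₀, MonoidHom.mem_ker.mp (hc_ker i)]⟩
  rw [acyEval_mul_center_of_acyProj_eq_one g₀ (fun j => ⟨c j, hc (hc_ker j)⟩) (hw i)]
  simp [c]

theorem IsSolution.eq_of_map_eq (hw : IsAcyclicSystem w) {g g' : Fin n → G}
    (hg : IsSolution w g) (hg' : IsSolution w g') (hgg' : π ∘ g = π ∘ g') : g = g' := by
  have hz (j : Fin n) : (g j)⁻¹ * g' j ∈ Subgroup.center G :=
    hc <| by simp [MonoidHom.mem_ker, show π (g j) = π (g' j) from congrFun hgg' j]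
  funext i
  have := acyEval_mul_center_of_acyProj_eq_one g (fun j => ⟨_, hz j⟩) (hw i)
  simp only [mul_inv_cancel_left] at this
  rw [← hg i, ← hg' i, this]

theorem AcyclicallyClosed.of_central_extension (hπ : Function.Surjective π)
    (hH : AcyclicallyClosed H) : AcyclicallyClosed G := by
  intro n w hw
  obtain ⟨h, hh, h_unique⟩ := hH n (mapSystem π w) ((isAcyclicSystem_mapSystem_iff π).2 hw)
  obtain ⟨g, hg, -⟩ := exists_isSolution_of_isSolution_mapSystem hc hπ hw hh
  refine ⟨g, hg, fun g' hg' => hg'.eq_of_map_eq hc hw hg ?_⟩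
  exact (h_unique _ (hg'.mapSystem π)).trans (h_unique _ (hg.mapSystem π)).symm

theorem AcyclicallyClosed.map_of_central_extension (hπ : Function.Surjective π)
    (hG : AcyclicallyClosed G) : AcyclicallyClosed H := by
  intro n v hv
  obtain ⟨w, rfl⟩ := exists_mapSystem_eq hπ v
  have hw := (isAcyclicSystem_mapSystem_iff π).1 hv
  obtain ⟨g, hg, hg_unique⟩ := hG n w hw
  refine ⟨π ∘ g, hg.mapSystem π, fun h hh => ?_⟩
  obtain ⟨g', hg', rfl⟩ := exists_isSolution_of_isSolution_mapSystem hc hπ hw hh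
  rw [hg_unique g' hg']

end CentralExtension

/-- A central extension `G` of `H` is acyclically closed iff `H` is.  In
particular (taking `H = G/[G,G]`), if `[G,G]` is central in `G` and the
abelianization of `G` is acyclically closed, then so is `G`. -/
theorem acyclicallyClosed_central_extension :
    (∀ (G : Type) [Group G],
        commutator G ≤ Subgroup.center G →
        AcyclicallyClosed (Abelianization G) →
        AcyclicallyClosed G) ∧
    (∀ (G H : Type) [Group G] [Group H] (π : G →* H),
        Function.Surjective π → π.ker ≤ Subgroup.center G →
        (AcyclicallyClosed G ↔ AcyclicallyClosed H)) := by
  refine ⟨fun G _ hcomm => ?_, fun G H _ _ π hπ hc => ?_⟩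
  · exact AcyclicallyClosed.of_central_extension (π := Abelianization.of)
      (Abelianization.ker_of G ▸ hcomm) (QuotientGroup.mk'_surjective _)
  · exact ⟨.map_of_central_extension hc hπ, .of_central_extension hc hπ⟩
end

section
/- Every abelian group is acyclically closed: for any abelian group G and any acyclic system x_i = w_i(x₁,…,x_n) over G, there is a unique solution, obtained by substituting the abelianized values. -/
/-!
In an abelian group, evaluating a monomial at `g` equals evaluating it at the trivial
assignment times the value at `g` of its image in `H₁(F_n)`. For an acyclic monomial that image
is trivial, so its value does not depend on the variables; an acyclic system `x_i = w_i` is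
therefore solved exactly by the constants `x_i = w_i(1, …, 1)`.
-/

open Monoid

section CommGroup

variable {G : Type*} [CommGroup G] {n : ℕ}

lemma acyEval_eq_mul_lift_acyProj (g : Fin n → G) :
    acyEval g = acyEval (fun _ => (1 : G)) *
      (Abelianization.lift (FreeGroup.lift g)).comp (acyProj G n) := by
  apply Coprod.hom_ext <;> ext <;> simp [acyEval, acyProj]

lemma acyEval_eq_of_acyProj_eq_one (g : Fin n → G) {w : Coprod G (FreeGroup (Fin n))}
    (hw : acyProj G n w = 1) : acyEval g w = acyEval (fun _ => (1 : G)) w := by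
  rw [acyEval_eq_mul_lift_acyProj g]
  simp [hw]

lemma isSolution_iff_of_isAcyclicSystem {w : Fin n → Coprod G (FreeGroup (Fin n))}
    (hw : IsAcyclicSystem w) {g : Fin n → G} :
    IsSolution w g ↔ g = fun i => acyEval (fun _ => (1 : G)) (w i) := by
  simp only [IsSolution, acyEval_eq_of_acyProj_eq_one g (hw _), funext_iff, eq_comm]

end CommGroup

/-- Every abelian group is acyclically closed; the unique solution of an
acyclic system is obtained by substituting the abelianized values, i.e. by
evaluating each `w_i` with all variables set to `1`. -/
theorem abelian_acyclicallyClosed (G : Type*) [CommGroup G] :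
    AcyclicallyClosed G ∧
      ∀ (n : ℕ) (w : Fin n → Monoid.Coprod G (FreeGroup (Fin n))),
        IsAcyclicSystem w →
          IsSolution w (fun i => acyEval (fun _ => (1 : G)) (w i)) := by
  have solves : ∀ (n : ℕ) (w : Fin n → Monoid.Coprod G (FreeGroup (Fin n))),
      IsAcyclicSystem w → IsSolution w (fun i => acyEval (fun _ => (1 : G)) (w i)) :=
    fun _ _ hw => (isSolution_iff_of_isAcyclicSystem hw).2 rfl
  exact ⟨fun n w hw => ⟨_, solves n w hw,
    fun _ hg => (isSolution_iff_of_isAcyclicSystem hw).1 hg⟩, solves⟩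
end

section
/- An inverse limit of acyclically closed groups is acyclically closed. In particular, the nilpotent completion F^nil = lim← F/Γ^k F of a finitely generated free group F is acyclically closed. -/
open Monoid

/-- The inverse limit of a system of groups indexed by a preorder, realized as
the subgroup of compatible sequences in the product. -/
def invLimit {ι : Type*} [Preorder ι] (G : ι → Type*) [∀ i, Group (G i)]
    (f : ∀ i j, i ≤ j → (G j →* G i)) : Subgroup (∀ i, G i) where
  carrier := {x | ∀ (i j : ι) (h : i ≤ j), f i j h (x j) = x i}
  one_mem' := by intro i j h; simp
  mul_mem' := by
    intro a b ha hb i j h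
    simp only [Pi.mul_apply, map_mul, ha i j h, hb i j h]
  inv_mem' := by
    intro a ha i j h
    simp only [Pi.inv_apply, map_inv, ha i j h]

/-- The transition map `F/Γ^{l+1} → F/Γ^{k+1}` between nilpotent quotients of a
group, for `k ≤ l`. -/
def nilTrans (F : Type*) [Group F] (k l : ℕ) (h : k ≤ l) :
    (F ⧸ (⊤ : Subgroup F).lowerCentralSeries l) →* (F ⧸ (⊤ : Subgroup F).lowerCentralSeries k) :=
  QuotientGroup.map _ _ (MonoidHom.id F)
    (fun x hx => Subgroup.lowerCentralSeries_antitone (⊤ : Subgroup F) h hx)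

/-! A central extension of an acyclically closed group is acyclically closed: solve the system
modulo the centre, lift the solution arbitrarily, and substitute the lift once into the system.
Acyclicity means the variables occur with total exponent zero, so the value of a monomial does not
change when the variables are multiplied by central elements; hence the substituted lift is the
unique solution. Induction along `G → G ⧸ Z(G)` gives all nilpotent groups, in particular all
`F ⧸ Γ^k F`. In an inverse limit the systems projected to the factors have unique solutions, which
are compatible by uniqueness and so assemble to the unique solution in the limit. -/

section ChangeOfCoefficients

variable {G H : Type*} [Group G] [Group H] (π : G →* H) {n : ℕ}

lemma acyProj_map (u : Coprod G (FreeGroup (Fin n))) :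
    acyProj H n (Coprod.map π (.id _) u) = acyProj G n u := by
  induction u using Coprod.induction_on <;> simp_all [acyProj]

lemma IsAcyclicSystem.map {w : Fin n → Coprod G (FreeGroup (Fin n))} (hw : IsAcyclicSystem w) :
    IsAcyclicSystem fun i => Coprod.map π (.id _) (w i) :=
  fun i => (acyProj_map π (w i)).trans (hw i)

lemma acyEval_map (g : Fin n → G) (u : Coprod G (FreeGroup (Fin n))) :
    acyEval (fun i => π (g i)) (Coprod.map π (.id _) u) = π (acyEval g u) := by
  suffices (acyEval fun i => π (g i)).comp (Coprod.map π (.id _)) = π.comp (acyEval g) from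
    DFunLike.congr_fun this u
  ext <;> simp [acyEval]

lemma IsSolution.map {w : Fin n → Coprod G (FreeGroup (Fin n))} {g : Fin n → G}
    (hg : IsSolution w g) :
    IsSolution (fun i => Coprod.map π (.id _) (w i)) fun i => π (g i) :=
  fun i => (acyEval_map π g (w i)).trans (congrArg π (hg i))

end ChangeOfCoefficients

section CentralExtension

variable {G : Type*} [Group G] {n : ℕ}

open scoped IsMulCommutative in
lemma acyEval_mul_of_mem_center (g c : Fin n → G) (hc : ∀ i, c i ∈ Subgroup.center G)
    {u : Coprod G (FreeGroup (Fin n))} (hu : acyProj G n u = 1) :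
    acyEval (fun i => g i * c i) u = acyEval g u := by
  -- `acyEval (g * c) = acyEval g * δ`, where `δ : x_i ↦ c i` factors through `H₁(F_n)` into the
  -- centre and therefore kills acyclic monomials.
  let δ : Coprod G (FreeGroup (Fin n)) →* Subgroup.center G :=
    (Abelianization.lift (FreeGroup.lift fun i => ⟨c i, hc i⟩)).comp (acyProj G n)
  have hδ : ∀ v y, Commute (δ v : G) y := fun v y =>
    (Subgroup.mem_center_iff.mp (δ v).2 y).symm
  let θ : Coprod G (FreeGroup (Fin n)) →* G :=
    MonoidHom.mk' (fun v => acyEval g v * δ v) fun x y => by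
      simp only [map_mul, Subgroup.coe_mul, mul_assoc, (hδ x _).left_comm]
  have hθ : acyEval (fun i => g i * c i) = θ := by
    ext <;> simp [θ, δ, acyEval, acyProj]
  simp [hθ, θ, δ, hu]

lemma acyEval_eq_of_map_eq {E : Type*} [Group E] (π : G →* E) (hπ : π.ker ≤ Subgroup.center G)
    {g g' : Fin n → G} (hgg' : ∀ i, π (g i) = π (g' i)) {u : Coprod G (FreeGroup (Fin n))}
    (hu : acyProj G n u = 1) : acyEval g u = acyEval g' u := by
  have hc : ∀ i, (g i)⁻¹ * g' i ∈ Subgroup.center G := fun i =>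
    hπ (by simp [MonoidHom.mem_ker, hgg' i])
  simpa using (acyEval_mul_of_mem_center g _ hc hu).symm

end CentralExtension

lemma AcyclicallyClosed.of_surjective_of_ker_le_center {G Q : Type*} [Group G] [Group Q]
    (π : G →* Q) (hsurj : Function.Surjective π) (hπ : π.ker ≤ Subgroup.center G)
    (hQ : AcyclicallyClosed Q) : AcyclicallyClosed G := by
  intro n w hw
  obtain ⟨q, hq, hq_unique⟩ := hQ n _ (hw.map π)
  choose g₀ hg₀ using fun i => hsurj (q i)
  have hlift : ∀ {g : Fin n → G}, IsSolution w g → ∀ i, π (g₀ i) = π (g i) := fun hg i =>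
    (hg₀ i).trans (congrFun (hq_unique _ (hg.map π)) i).symm
  refine ⟨fun i => acyEval g₀ (w i), fun i => ?_, fun g hg => funext fun i => ?_⟩
  · refine acyEval_eq_of_map_eq π hπ (fun j => ?_) (hw i) |>.symm
    rw [hg₀, ← hq j, ← acyEval_map, funext hg₀]
  · rw [← hg i]
    exact acyEval_eq_of_map_eq π hπ (hlift hg) (hw i) |>.symm

lemma AcyclicallyClosed.of_subsingleton {G : Type*} [Group G] [Subsingleton G] :
    AcyclicallyClosed G :=
  fun _ _ _ => ⟨1, fun _ => Subsingleton.elim _ _, fun _ _ => Subsingleton.elim _ _⟩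

lemma AcyclicallyClosed.of_isNilpotent (G : Type*) [Group G] [Group.IsNilpotent G] :
    AcyclicallyClosed G := by
  refine Group.nilpotent_center_quotient_ind (P := fun G _ _ => AcyclicallyClosed G) G
    (fun _ _ _ => .of_subsingleton) fun G _ _ ih => ?_
  refine .of_surjective_of_ker_le_center (QuotientGroup.mk' _) (QuotientGroup.mk'_surjective _)
    ?_ ih
  rw [QuotientGroup.ker_mk']

instance isNilpotent_quotient_lowerCentralSeries (F : Type*) [Group F] (k : ℕ) :
    Group.IsNilpotent (F ⧸ (⊤ : Subgroup F).lowerCentralSeries k) := by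
  refine Subgroup.nilpotent_iff_lowerCentralSeries.mpr ⟨k, ?_⟩
  rw [← Subgroup.map_top_of_surjective _ (QuotientGroup.mk'_surjective _),
    ← Subgroup.map_lowerCentralSeries, QuotientGroup.map_mk'_self]

namespace invLimit

variable {ι : Type*} [Preorder ι] {G : ι → Type*} [∀ i, Group (G i)]
  (f : ∀ i j, i ≤ j → (G j →* G i))

def proj (i : ι) : invLimit G f →* G i := (Pi.evalMonoidHom G i).comp (invLimit G f).subtype

lemma comp_proj {i j : ι} (h : i ≤ j) : (f i j h).comp (proj f j) = proj f i :=
  MonoidHom.ext fun x => x.2 i j h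

end invLimit

open invLimit in
lemma acyclicallyClosed_invLimit {ι : Type*} [Preorder ι] {G : ι → Type*} [∀ i, Group (G i)]
    {f : ∀ i j, i ≤ j → (G j →* G i)} (hG : ∀ i, AcyclicallyClosed (G i)) :
    AcyclicallyClosed (invLimit G f) := by
  intro n w hw
  choose s hs hs_unique using fun i => hG i n _ (hw.map (proj f i))
  have hcompat : ∀ i j (h : i ≤ j) k, f i j h (s j k) = s i k := fun i j h =>
    congrFun <| hs_unique i _ <| by simpa [Coprod.map_map, comp_proj] using (hs j).map (f i j h)
  let x : Fin n → invLimit G f := fun k => ⟨fun i => s i k, fun i j h => hcompat i j h k⟩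
  refine ⟨x, fun k => Subtype.ext <| funext fun i => ?_,
    fun g hg => funext fun k => Subtype.ext <| funext fun i => ?_⟩
  · exact (acyEval_map (proj f i) x (w k)).symm.trans (hs i k)
  · exact congrFun (hs_unique i _ (hg.map (proj f i))) k

/-- An inverse limit of acyclically closed groups is acyclically closed; in
particular, the nilpotent completion `F^nil = lim← F/Γ^k F` of a finitely
generated free group is acyclically closed. -/
theorem invLimit_acyclicallyClosed :
    (∀ (ι : Type) [Preorder ι] (G : ι → Type) [∀ i, Group (G i)]
        (f : ∀ i j, i ≤ j → (G j →* G i)),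
        (∀ i, f i i le_rfl = MonoidHom.id (G i)) →
        (∀ i j k (hij : i ≤ j) (hjk : j ≤ k),
          (f i j hij).comp (f j k hjk) = f i k (hij.trans hjk)) →
        (∀ i, AcyclicallyClosed (G i)) →
        AcyclicallyClosed ↥(invLimit G f)) ∧
    ∀ m : ℕ, AcyclicallyClosed
      ↥(invLimit (fun k : ℕ => FreeGroup (Fin m) ⧸ (⊤ : Subgroup (FreeGroup (Fin m))).lowerCentralSeries k)
        (fun k l h => nilTrans (FreeGroup (Fin m)) k l h)) :=
  ⟨fun _ _ _ _ _ _ _ hG => acyclicallyClosed_invLimit hG,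
    fun _ => acyclicallyClosed_invLimit fun _ => .of_isNilpotent _⟩
end

section
/- Let (M, i₊, i₋) and (N, j₊, j₋) be elements of the monoid A_n of triples (G, φ₊, φ₋) where G is a finitely presentable group and φ± : F_n → G are 2-connected homomorphisms, with multiplication (G, φ₊, φ₋)·(G', ψ₊, ψ₋) = (G ∗_{F_n} G', φ₊, ψ₋) using the amalgamated product over φ₋ and ψ₊. Then in the quotient group B_n by homology cobordism, the inverse of the class of (G, φ₊, φ₋) is the class of (G, φ₋, φ₊); explicitly, the fold map G ∗_{F_n} G → G together with φ₊ : F_n → G gives a homology cobordism between (G, φ₊, φ₋)·(G, φ₋, φ₊) and the identity (F_n, id, id). -/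
/-- The canonical free presentation `FreeGroup G → G` of a group. -/
def freePres (G : Type*) [Group G] : FreeGroup G →* G := FreeGroup.lift id

/-- Surjectivity on second group homology `H₂`, expressed via Hopf's formula
`H₂(G) = (R ∩ [F,F])/[F,R]` for the canonical presentation `G = F/R`,
`F = FreeGroup G`: the lift `FreeGroup f : FreeGroup A → FreeGroup B` of `f`
carries `(R_A ∩ [F_A,F_A])` onto `(R_B ∩ [F_B,F_B])` modulo `[F_B,R_B]`. -/
def H2Surjective {A B : Type*} [Group A] [Group B] (f : A →* B) : Prop :=
  ∀ y ∈ (freePres B).ker ⊓ commutator (FreeGroup B),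
    ∃ x ∈ (freePres A).ker ⊓ commutator (FreeGroup A),
      y⁻¹ * FreeGroup.map f x ∈
        ⁅((freePres B).ker : Subgroup (FreeGroup B)), (⊤ : Subgroup (FreeGroup B))⁆

/-- A homomorphism is *2-connected* if it induces an isomorphism on `H₁`
(abelianizations) and a surjection on `H₂`. -/
def TwoConnected {A B : Type*} [Group A] [Group B] (f : A →* B) : Prop :=
  Function.Bijective (Abelianization.map f) ∧ H2Surjective f

/-- A group is finitely presentable if it is isomorphic to a quotient of a
finitely generated free group by the normal closure of finitely many relators. -/
def FinitelyPresentable (G : Type*) [Group G] : Prop :=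
  ∃ (m : ℕ) (S : Finset (FreeGroup (Fin m))),
    Nonempty ((FreeGroup (Fin m) ⧸
      Subgroup.normalClosure (S : Set (FreeGroup (Fin m)))) ≃* G)


/-!
The fold map retracts both inclusions `G → G ∗_{F_n} G`, so `fold ∘ ι_b ∘ φ₊ = φ₊`.

On `H₁`: the abelianization of `G ∗_{F_n} G` is generated by the two copies of `H₁(G)`, both
images of `H₁(F_n)` under `φ₋`, so `ι_b ∘ φ₊` is onto on `H₁` because `φ₊` is; composed with the
fold map it gives the isomorphism `H₁(φ₊)`, hence both are bijective on `H₁`.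

On `H₂`: `H₂(G) = 0`, since `H₂(F_n) = 0` maps onto it. In the Mayer–Vietoris sequence
`H₂(G) ⊕ H₂(G) → H₂(G ∗_{F_n} G) → H₁(F_n) → H₁(G) ⊕ H₁(G)` the last map is injective, so
`H₂(G ∗_{F_n} G) = 0`, and every map into `G` or `G ∗_{F_n} G` is onto on `H₂`. We run this
argument in Hopf's formula `(R ∩ [F, F]) / [R, F]` for the presentation `F → G ∗_{F_n} G` on two
copies of the generators of `G`: there `R / [R, F]` is central, so it is the product of the images
of the relators of each copy of `G` and of the identifications of the two copies of `F_n`.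
The same presentation, on finitely many generators and relators, shows finite presentability.
-/

open Subgroup

section LiftDifference

variable {A F B : Type*} [Group A] [Group F] [Group B]

theorem map_ker_le_center (ρ : F →* B) :
    ρ.ker.map (QuotientGroup.mk' ⁅ρ.ker, (⊤ : Subgroup F)⁆) ≤
      center (F ⧸ ⁅ρ.ker, (⊤ : Subgroup F)⁆) := by
  rw [← commutator_top_right_eq_bot_iff_le_center,
    ← map_top_of_surjective _ (QuotientGroup.mk'_surjective _), ← map_commutator,
    Subgroup.map_eq_bot_iff, QuotientGroup.ker_mk']

theorem mul_inv_mem_ker_of_comp_eq (ρ : F →* B) {α α' : A →* F} (h : ρ.comp α = ρ.comp α')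
    (a : A) : α a * (α' a)⁻¹ ∈ ρ.ker := by
  rw [MonoidHom.mem_ker, map_mul, map_inv, ← MonoidHom.comp_apply, h, MonoidHom.comp_apply,
    mul_inv_cancel]

/-- A homomorphism because its values lie in `ker ρ`, which is central modulo `⁅ker ρ, ⊤⁆`. -/
def liftDiff (ρ : F →* B) (α α' : A →* F) (h : ρ.comp α = ρ.comp α') :
    A →* F ⧸ ⁅ρ.ker, (⊤ : Subgroup F)⁆ where
  toFun a := ↑(α a * (α' a)⁻¹)
  map_one' := by simp
  map_mul' x y := by
    have hy : ((α y * (α' y)⁻¹ : F) : F ⧸ ⁅ρ.ker, (⊤ : Subgroup F)⁆) ∈ center _ :=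
      map_ker_le_center ρ ⟨_, mul_inv_mem_ker_of_comp_eq ρ h y, rfl⟩
    calc ((α (x * y) * (α' (x * y))⁻¹ : F) : F ⧸ ⁅ρ.ker, (⊤ : Subgroup F)⁆)
        = ↑(α x) * ↑(α y * (α' y)⁻¹) * (↑(α' x))⁻¹ := by simp [mul_assoc]
      _ = ↑(α x * (α' x)⁻¹) * ↑(α y * (α' y)⁻¹) := by
        rw [mul_assoc, ← mem_center_iff.mp hy]; simp [mul_assoc]

theorem liftDiff_apply (ρ : F →* B) (α α' : A →* F) (h : ρ.comp α = ρ.comp α') (a : A) :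
    liftDiff ρ α α' h a = ↑(α a * (α' a)⁻¹) := rfl

theorem range_liftDiff_le_center (ρ : F →* B) (α α' : A →* F) (h : ρ.comp α = ρ.comp α') :
    (liftDiff ρ α α' h).range ≤ center _ := by
  rintro _ ⟨a, rfl⟩
  exact map_ker_le_center ρ ⟨_, mul_inv_mem_ker_of_comp_eq ρ h a, rfl⟩

theorem mul_inv_mem_commutator_ker (ρ : F →* B) {α α' : A →* F} (h : ρ.comp α = ρ.comp α')
    {a : A} (ha : a ∈ commutator A) : α a * (α' a)⁻¹ ∈ ⁅ρ.ker, (⊤ : Subgroup F)⁆ := by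
  have hbot : (commutator A).map (liftDiff ρ α α' h) = ⊥ := by
    rw [map_commutator_eq, eq_bot_iff]
    exact (commutator_mono le_rfl (range_liftDiff_le_center ρ α α' h)).trans
      (commutator_center_right _).le
  have := hbot ▸ mem_map_of_mem (liftDiff ρ α α' h) ha
  rwa [mem_bot, liftDiff_apply, QuotientGroup.eq_one_iff] at this

end LiftDifference

section Hopf

variable {A B X : Type*} [Group A] [Group B]

/-- `H₂(B) = 0`, in the form of Hopf's formula for the canonical presentation. -/
def H2Trivial (B : Type*) [Group B] : Prop :=
  (freePres B).ker ⊓ commutator (FreeGroup B) ≤ ⁅(freePres B).ker, (⊤ : Subgroup (FreeGroup B))⁆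

@[simp] theorem freePres_of (b : B) : freePres B (FreeGroup.of b) = b :=
  FreeGroup.lift_apply_of

theorem freePres_surjective : Function.Surjective (freePres B) :=
  fun b => ⟨FreeGroup.of b, freePres_of b⟩

theorem freePres_comp_map (f : A →* B) :
    (freePres B).comp (FreeGroup.map f) = f.comp (freePres A) :=
  FreeGroup.ext_hom _ _ fun a => by simp

theorem map_commutator_le_commutator (f : A →* B) : (commutator A).map f ≤ commutator B := by
  rw [map_commutator_eq]; exact commutator_mono le_top le_top

theorem map_commutator_top_le (f : A →* B) {N : Subgroup A} {N' : Subgroup B}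
    (h : N.map f ≤ N') : ⁅N, (⊤ : Subgroup A)⁆.map f ≤ ⁅N', (⊤ : Subgroup B)⁆ := by
  rw [map_commutator]; exact commutator_mono h le_top

theorem h2Trivial_of_presentation (ρ : FreeGroup X →* B) (hρ : Function.Surjective ρ)
    (h : ρ.ker ⊓ commutator (FreeGroup X) ≤ ⁅ρ.ker, (⊤ : Subgroup (FreeGroup X))⁆) :
    H2Trivial B := by
  set β : FreeGroup X →* FreeGroup B := FreeGroup.map fun x => ρ (FreeGroup.of x)
  set α : FreeGroup B →* FreeGroup X := FreeGroup.lift (Function.surjInv hρ)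
  have hβ : (freePres B).comp β = ρ := FreeGroup.ext_hom _ _ fun x => by simp [β]
  have hα : ρ.comp α = freePres B :=
    FreeGroup.ext_hom _ _ fun b => by simp [α, Function.surjInv_eq hρ]
  have hlifts : (freePres B).comp (MonoidHom.id _) = (freePres B).comp (β.comp α) := by
    rw [← MonoidHom.comp_assoc, hβ, hα, MonoidHom.comp_id]
  intro y hy
  obtain ⟨hyR, hyc⟩ := mem_inf.mp hy
  have hαy : α y ∈ ρ.ker ⊓ commutator (FreeGroup X) :=
    mem_inf.mpr ⟨by rwa [MonoidHom.mem_ker, ← MonoidHom.comp_apply, hα],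
      map_commutator_le_commutator α (mem_map_of_mem α hyc)⟩
  have hβαy : β (α y) ∈ ⁅(freePres B).ker, (⊤ : Subgroup (FreeGroup B))⁆ := by
    refine map_commutator_top_le β ?_ (mem_map_of_mem β (h hαy))
    rintro _ ⟨r, hr, rfl⟩
    rwa [MonoidHom.mem_ker, ← MonoidHom.comp_apply, hβ]
  simpa using mul_mem (mul_inv_mem_commutator_ker (freePres B) hlifts hyc) hβαy

theorem h2Trivial_freeGroup (X : Type*) : H2Trivial (FreeGroup X) :=
  h2Trivial_of_presentation (MonoidHom.id _) Function.surjective_id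
    (by simp [MonoidHom.ker_id])

theorem H2Surjective.h2Trivial {f : FreeGroup X →* B} (hf : H2Surjective f) : H2Trivial B := by
  intro y hy
  obtain ⟨x, hx, hyx⟩ := hf y hy
  have hfx : FreeGroup.map f x ∈ ⁅(freePres B).ker, (⊤ : Subgroup (FreeGroup B))⁆ := by
    refine map_commutator_top_le (FreeGroup.map f) ?_
      (mem_map_of_mem _ (h2Trivial_freeGroup X hx))
    rintro _ ⟨r, hr, rfl⟩
    rw [SetLike.mem_coe, MonoidHom.mem_ker] at hr
    rw [MonoidHom.mem_ker, ← MonoidHom.comp_apply, freePres_comp_map, MonoidHom.comp_apply, hr,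
      map_one]
  simpa using inv_mem (mul_mem hyx (inv_mem hfx))

theorem H2Trivial.h2Surjective (hB : H2Trivial B) (f : A →* B) : H2Surjective f :=
  fun y hy => ⟨1, one_mem _, by simpa using inv_mem (hB hy)⟩

end Hopf

section PushoutPresentation

open Monoid

variable {X Y H G : Type*} [Group H] [Group G]

def copyIncl (b : Bool) : FreeGroup X →* FreeGroup (Bool × X) := FreeGroup.map (Prod.mk b)

def copyProj (b : Bool) : FreeGroup (Bool × X) →* FreeGroup X :=
  FreeGroup.lift fun p => if p.1 = b then FreeGroup.of p.2 else 1

def copyDiff (w : FreeGroup X) : FreeGroup (Bool × X) := copyIncl false w * (copyIncl true w)⁻¹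

theorem copyProj_copyIncl_self (b : Bool) (w : FreeGroup X) :
    copyProj b (copyIncl b w) = w := by
  rw [← MonoidHom.comp_apply]
  exact DFunLike.congr_fun (FreeGroup.ext_hom _ (MonoidHom.id _) fun x => by
    simp [copyProj, copyIncl]) w

theorem copyProj_copyIncl_of_ne {b b' : Bool} (h : b' ≠ b) (w : FreeGroup X) :
    copyProj b (copyIncl b' w) = 1 := by
  rw [← MonoidHom.comp_apply]
  exact DFunLike.congr_fun (FreeGroup.ext_hom _ 1 fun x => by
    simp [copyProj, copyIncl, h]) w

/-- The presentation of `G ∗_H G` on two copies of the generators of a presentation `q` of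
`G`. -/
def pushoutPres (φ : H →* G) (q : FreeGroup X →* G) :
    FreeGroup (Bool × X) →* PushoutI fun _ : Bool => φ :=
  FreeGroup.lift fun p => PushoutI.of p.1 (q (FreeGroup.of p.2))

/-- With `S` the relators of `G` and `v y` a lift of `φ y` for the generators `y` of `H`. -/
def pushoutRelators (S : Set (FreeGroup X)) (v : Y → FreeGroup X) :
    Set (FreeGroup (Bool × X)) :=
  (⋃ b, copyIncl b '' S) ∪ Set.range (copyDiff ∘ v)

variable (φ : H →* G) (q : FreeGroup X →* G)

theorem pushoutPres_comp_copyIncl (b : Bool) :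
    (pushoutPres φ q).comp (copyIncl b) = (PushoutI.of b).comp q :=
  FreeGroup.ext_hom _ _ fun x => by simp [pushoutPres, copyIncl]

theorem pushoutPres_copyIncl (b : Bool) (w : FreeGroup X) :
    pushoutPres φ q (copyIncl b w) = PushoutI.of b (q w) :=
  DFunLike.congr_fun (pushoutPres_comp_copyIncl φ q b) w

theorem pushoutPres_surjective (hq : Function.Surjective q) :
    Function.Surjective (pushoutPres φ q) := by
  intro p
  induction p using PushoutI.induction_on with
  | of b g =>
    obtain ⟨w, rfl⟩ := hq g
    exact ⟨copyIncl b w, pushoutPres_copyIncl φ q b w⟩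
  | base h =>
    obtain ⟨w, hw⟩ := hq (φ h)
    exact ⟨copyIncl false w, by rw [pushoutPres_copyIncl, hw, PushoutI.of_apply_eq_base]⟩
  | mul x y hx hy =>
    obtain ⟨a, rfl⟩ := hx
    obtain ⟨c, rfl⟩ := hy
    exact ⟨a * c, map_mul _ _ _⟩

theorem map_ker_copyIncl_le (b : Bool) :
    q.ker.map (copyIncl b) ≤ (pushoutPres φ q).ker := by
  rintro _ ⟨r, hr, rfl⟩
  rw [SetLike.mem_coe, MonoidHom.mem_ker] at hr
  rw [MonoidHom.mem_ker, pushoutPres_copyIncl, hr, map_one]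

end PushoutPresentation

theorem Subgroup.normal_of_le_center {Q : Type*} [Group Q] {M : Subgroup Q}
    (h : M ≤ center Q) : M.Normal :=
  ⟨fun m hm g => by rwa [mem_center_iff.mp (h hm) g, mul_inv_cancel_right]⟩

section PushoutH2

open Monoid

variable {X Y G : Type*} [Group G] {φ : FreeGroup Y →* G} {q : FreeGroup X →* G}
  {v : Y → FreeGroup X}

theorem ker_pushoutPres {S : Set (FreeGroup X)} (hq : Function.Surjective q)
    (hS : normalClosure S = q.ker) (hv : ∀ y, q (v y) = φ (FreeGroup.of y)) :
    (pushoutPres φ q).ker = normalClosure (pushoutRelators S v) := by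
  set N := normalClosure (pushoutRelators S v)
  have hrel : ∀ y, (copyIncl false (v y) : FreeGroup (Bool × X) ⧸ N) = copyIncl true (v y) :=
    fun y => QuotientGroup.eq_iff_div_mem.mpr (subset_normalClosure (Or.inr ⟨y, rfl⟩))
  have hker : ∀ b, q.ker ≤ ((QuotientGroup.mk' N).comp (copyIncl b)).ker := by
    intro b
    rw [← hS]
    refine normalClosure_le_normal fun s hs => ?_
    rw [SetLike.mem_coe, MonoidHom.mem_ker, MonoidHom.comp_apply, QuotientGroup.mk'_apply,
      QuotientGroup.eq_one_iff]
    exact subset_normalClosure (Or.inl (Set.mem_iUnion.mpr ⟨b, s, hs, rfl⟩))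
  set g : Bool → G →* FreeGroup (Bool × X) ⧸ N := fun b =>
    q.liftOfSurjective hq ⟨(QuotientGroup.mk' N).comp (copyIncl b), hker b⟩
  have hg : ∀ b w, g b (q w) = (copyIncl b w : FreeGroup (Bool × X) ⧸ N) := fun b w =>
    q.liftOfRightInverse_comp_apply _ _ _ w
  have hcompat : ∀ b, (g b).comp φ =
      (QuotientGroup.mk' N).comp ((copyIncl false).comp (FreeGroup.lift v)) := by
    intro b
    refine FreeGroup.ext_hom _ _ fun y => ?_
    simp only [MonoidHom.comp_apply, FreeGroup.lift_apply_of, ← hv, hg, QuotientGroup.mk'_apply]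
    cases b
    · rfl
    · exact (hrel y).symm
  have hsection : (PushoutI.lift g _ hcompat).comp (pushoutPres φ q) = QuotientGroup.mk' N :=
    FreeGroup.ext_hom _ _ fun p => by simp [pushoutPres, hg, copyIncl]
  refine le_antisymm (fun x hx => ?_) (normalClosure_le_normal ?_)
  · rw [← QuotientGroup.ker_mk' N, ← hsection, MonoidHom.mem_ker, MonoidHom.comp_apply,
      MonoidHom.mem_ker.mp hx, map_one]
  · rintro x (hx | ⟨y, rfl⟩)
    · obtain ⟨b, s, hs, rfl⟩ := Set.mem_iUnion.mp hx
      exact map_ker_copyIncl_le φ q b ⟨s, hS ▸ subset_normalClosure hs, rfl⟩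
    · rw [SetLike.mem_coe, Function.comp_apply, copyDiff, MonoidHom.mem_ker, map_mul, map_inv,
        pushoutPres_copyIncl, pushoutPres_copyIncl, hv, PushoutI.of_apply_eq_base,
        PushoutI.of_apply_eq_base, mul_inv_cancel]

theorem comp_freeGroupLift_eq (hv : ∀ y, q (v y) = φ (FreeGroup.of y)) :
    q.comp (FreeGroup.lift v) = φ :=
  FreeGroup.ext_hom _ _ fun y => by simp [hv]

theorem pushoutPres_comp_copyIncl_lift (hv : ∀ y, q (v y) = φ (FreeGroup.of y)) :
    (pushoutPres φ q).comp ((copyIncl false).comp (FreeGroup.lift v)) =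
      (pushoutPres φ q).comp ((copyIncl true).comp (FreeGroup.lift v)) := by
  simp only [← MonoidHom.comp_assoc, pushoutPres_comp_copyIncl]
  rw [MonoidHom.comp_assoc, MonoidHom.comp_assoc, comp_freeGroupLift_eq hv,
    PushoutI.of_comp_eq_base, PushoutI.of_comp_eq_base]

/-- The relators generate `R` as a normal subgroup, but modulo `⁅R, ⊤⁆` they are central, so there
they generate it as a subgroup. -/
theorem exists_pushoutPres_ker_decomposition (hq : Function.Surjective q)
    (hv : ∀ y, q (v y) = φ (FreeGroup.of y)) {x : FreeGroup (Bool × X)}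
    (hx : x ∈ (pushoutPres φ q).ker) :
    ∃ r₁ ∈ q.ker, ∃ r₂ ∈ q.ker, ∃ z : FreeGroup Y,
      (x : FreeGroup (Bool × X) ⧸ ⁅(pushoutPres φ q).ker, (⊤ : Subgroup _)⁆) =
        ↑(copyIncl false r₁ * copyIncl true r₂ * copyDiff (FreeGroup.lift v z)) := by
  set ρ := pushoutPres φ q
  set π := QuotientGroup.mk' ⁅ρ.ker, (⊤ : Subgroup (FreeGroup (Bool × X)))⁆
  set t := liftDiff ρ _ _ (pushoutPres_comp_copyIncl_lift hv)
  set M₁ := (q.ker.map (copyIncl false)).map π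
  set M₂ := (q.ker.map (copyIncl true)).map π
  have hcopy : ∀ b, (q.ker.map (copyIncl b)).map π ≤ center _ := fun b =>
    (map_mono (map_ker_copyIncl_le φ q b)).trans (map_ker_le_center ρ)
  have ht := range_liftDiff_le_center ρ _ _ (pushoutPres_comp_copyIncl_lift hv)
  have : t.range.Normal := normal_of_le_center ht
  have : (M₂ ⊔ t.range).Normal := normal_of_le_center (sup_le (hcopy true) ht)
  have : (M₁ ⊔ (M₂ ⊔ t.range)).Normal :=
    normal_of_le_center (sup_le (hcopy false) (sup_le (hcopy true) ht))
  have hle : ρ.ker.map π ≤ M₁ ⊔ (M₂ ⊔ t.range) := by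
    refine (map_mono (ker_pushoutPres hq (normalClosure_eq_self q.ker) hv).le).trans ?_
    rw [map_normalClosure _ _ (QuotientGroup.mk'_surjective _)]
    refine normalClosure_le_normal ?_
    rintro _ ⟨x, hx | ⟨y, rfl⟩, rfl⟩
    · obtain ⟨b, r, hr, rfl⟩ := Set.mem_iUnion.mp hx
      cases b
      · exact mem_sup_left ⟨_, ⟨r, hr, rfl⟩, rfl⟩
      · exact mem_sup_right (mem_sup_left ⟨_, ⟨r, hr, rfl⟩, rfl⟩)
    · exact mem_sup_right (mem_sup_right ⟨FreeGroup.of y, by simp [t, liftDiff_apply, copyDiff]⟩)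
  obtain ⟨_, ⟨_, ⟨r₁, hr₁, rfl⟩, rfl⟩, _, hrest, hx⟩ :=
    mem_sup_of_normal_right.mp (hle (mem_map_of_mem π hx))
  obtain ⟨_, ⟨_, ⟨r₂, hr₂, rfl⟩, rfl⟩, _, ⟨z, rfl⟩, rfl⟩ := mem_sup_of_normal_right.mp hrest
  exact ⟨r₁, hr₁, r₂, hr₂, z, by
    rw [← QuotientGroup.mk'_apply, ← hx]; simp [π, t, liftDiff_apply, copyDiff, mul_assoc]⟩

/-- Projecting to either copy and abelianizing, the `H`-part dies as `H₁(φ)` is injective; then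
each `G`-part lies in `⁅ker q, ⊤⁆` by the Hopf condition for `q`. -/
theorem mem_commutator_ker_of_decomposition (hv : ∀ y, q (v y) = φ (FreeGroup.of y))
    (hφ : Function.Injective (Abelianization.map φ))
    (hG : q.ker ⊓ commutator (FreeGroup X) ≤ ⁅q.ker, (⊤ : Subgroup (FreeGroup X))⁆)
    {x : FreeGroup (Bool × X)} (hx : x ∈ commutator _) {r₁ r₂ : FreeGroup X} (hr₁ : r₁ ∈ q.ker)
    (hr₂ : r₂ ∈ q.ker) (z : FreeGroup Y)
    (hxw : (x : FreeGroup (Bool × X) ⧸ ⁅(pushoutPres φ q).ker, (⊤ : Subgroup _)⁆) =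
        ↑(copyIncl false r₁ * copyIncl true r₂ * copyDiff (FreeGroup.lift v z))) :
    x ∈ ⁅(pushoutPres φ q).ker, (⊤ : Subgroup _)⁆ := by
  set W := FreeGroup.lift v
  set K := ⁅(pushoutPres φ q).ker, (⊤ : Subgroup (FreeGroup (Bool × X)))⁆
  set w := copyIncl false r₁ * copyIncl true r₂ * copyDiff (W z)
  have hxw' : x⁻¹ * w ∈ K := QuotientGroup.eq.mp hxw
  have hw : w ∈ commutator _ := by
    simpa using mul_mem hx (commutator_mono le_top le_rfl hxw')
  have hproj : ∀ b, copyProj b w ∈ commutator _ := fun b =>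
    map_commutator_le_commutator _ (mem_map_of_mem _ hw)
  have h₁ : r₁ * W z ∈ commutator _ := by
    simpa [w, copyDiff, copyProj_copyIncl_self, copyProj_copyIncl_of_ne] using hproj false
  have h₂ : r₂ * (W z)⁻¹ ∈ commutator _ := by
    simpa [w, copyDiff, copyProj_copyIncl_self, copyProj_copyIncl_of_ne] using hproj true
  have hz : z ∈ commutator (FreeGroup Y) := by
    have hφz : φ z ∈ commutator G := by
      have := map_commutator_le_commutator q (mem_map_of_mem q h₁)
      rwa [map_mul, MonoidHom.mem_ker.mp hr₁, one_mul, ← MonoidHom.comp_apply,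
        comp_freeGroupLift_eq hv] at this
    rw [← Abelianization.ker_of, MonoidHom.mem_ker] at hφz ⊢
    exact hφ (by rw [Abelianization.map_of, hφz, map_one])
  have hWz : W z ∈ commutator _ := map_commutator_le_commutator W (mem_map_of_mem W hz)
  have hcopy : ∀ b, ∀ r ∈ q.ker, r ∈ commutator _ → copyIncl b r ∈ K := fun b r hr hrc =>
    map_commutator_top_le (copyIncl b) (map_ker_copyIncl_le φ q b)
      (mem_map_of_mem _ (hG (mem_inf.mpr ⟨hr, hrc⟩)))
  have hwK : w ∈ K :=
    mul_mem (mul_mem (hcopy false r₁ hr₁ (by simpa using mul_mem h₁ (inv_mem hWz)))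
      (hcopy true r₂ hr₂ (by simpa using mul_mem h₂ hWz)))
      (mul_inv_mem_commutator_ker _ (pushoutPres_comp_copyIncl_lift hv) hz)
  simpa using mul_mem hwK (inv_mem hxw')

end PushoutH2

section Pushout

open Monoid

variable {Y G : Type*} [Group G]

theorem h2Trivial_pushoutI (φ : FreeGroup Y →* G)
    (hφ : Function.Injective (Abelianization.map φ))
    (hG : H2Trivial G) : H2Trivial (PushoutI fun _ : Bool => φ) := by
  have hv : ∀ y, freePres G (FreeGroup.of (φ (FreeGroup.of y))) = φ (FreeGroup.of y) :=
    fun y => freePres_of _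
  refine h2Trivial_of_presentation _ (pushoutPres_surjective φ _ freePres_surjective) ?_
  intro x hx
  obtain ⟨hxR, hxc⟩ := mem_inf.mp hx
  obtain ⟨r₁, hr₁, r₂, hr₂, z, hxw⟩ :=
    exists_pushoutPres_ker_decomposition freePres_surjective hv hxR
  exact mem_commutator_ker_of_decomposition hv hφ hG hxc hr₁ hr₂ z hxw

theorem isFinitelyPresented_pushoutI [Finite Y] (φ : FreeGroup Y →* G)
    [hG : Group.IsFinitelyPresented G] :
    Group.IsFinitelyPresented (PushoutI fun _ : Bool => φ) := by
  obtain ⟨m, q, hq, S, hS, hSq⟩ := hG.out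
  choose v hv using fun y => hq (φ (FreeGroup.of y))
  refine .of_surjective (pushoutPres φ q) (pushoutPres_surjective φ q hq)
    ⟨pushoutRelators S v, ?_, (ker_pushoutPres hq hSq hv).symm⟩
  exact (Set.finite_iUnion fun b => hS.image _).union (Set.finite_range _)

theorem surjective_abelianizationMap_of {H ι : Type*} [Group H] (φ : H →* G)
    (hφ : Function.Surjective (Abelianization.map φ)) (i : ι) :
    Function.Surjective (Abelianization.map (PushoutI.of (φ := fun _ : ι => φ) i)) := by
  have hrange : ∀ j, (Abelianization.map (PushoutI.of (φ := fun _ : ι => φ) j)).range =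
      (Abelianization.map (PushoutI.base fun _ : ι => φ)).range := fun j => by
    rw [← PushoutI.of_comp_eq_base j, ← Abelianization.map_comp, MonoidHom.range_comp,
      MonoidHom.range_eq_top.mpr hφ, ← MonoidHom.range_eq_map]
  rw [← MonoidHom.range_eq_top, eq_top_iff]
  rintro a -
  obtain ⟨p, rfl⟩ := QuotientGroup.mk_surjective a
  induction p using PushoutI.induction_on with
  | of j g => rw [hrange i, ← hrange j]; exact ⟨Abelianization.of g, rfl⟩
  | base h => rw [hrange i]; exact ⟨Abelianization.of h, rfl⟩
  | mul x y hx hy => exact mul_mem hx hy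

end Pushout

theorem finitelyPresentable_iff_isFinitelyPresented (G : Type*) [Group G] :
    FinitelyPresentable G ↔ Group.IsFinitelyPresented G := by
  constructor
  · rintro ⟨m, S, ⟨e⟩⟩
    exact Group.IsFinitelyPresented.equiv (G := PresentedGroup (S : Set (FreeGroup (Fin m)))) e
  · intro
    obtain ⟨m, S, hS, ⟨e⟩⟩ := Group.IsFinitelyPresented.exists_mulEquiv_presentedGroup (G := G)
    exact ⟨m, hS.toFinset,
      ⟨(QuotientGroup.quotientMulEquivOfEq (by rw [Set.Finite.coe_toFinset])).trans e.symm⟩⟩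

theorem Function.Bijective.of_comp_of_surjective {α β γ : Type*} {f : α → β} {g : β → γ}
    (hgf : Function.Bijective (g ∘ f)) (hf : Function.Surjective f) :
    Function.Bijective f ∧ Function.Bijective g :=
  have hf' : Function.Bijective f := ⟨hgf.1.of_comp, hf⟩
  ⟨hf', (Function.Bijective.of_comp_iff g hf').mp hgf⟩

/-- In the group `B_n` of homology-cobordism classes of triples `(G, φ₊, φ₋)`
(`G` finitely presentable, `φ± : F_n → G` 2-connected), the inverse of the
class of `(G, φ₊, φ₋)` is the class of `(G, φ₋, φ₊)`.  Explicitly, the product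
`(G, φ₊, φ₋)·(G, φ₋, φ₊) = (G ∗_{F_n} G, inl∘φ₊, inr∘φ₊)` (amalgamated over
`φ₋` on both factors) is an element of `A_n`, and the fold map
`id ∗_{F_n} id : G ∗_{F_n} G → G` together with `φ₊ : F_n → G` is a homology
cobordism between it and the identity `(F_n, id, id)`: the fold map is
2-connected and the relevant square commutes. -/
theorem inverse_in_Bn (n : ℕ) (G : Type*) [Group G] (hGfp : FinitelyPresentable G)
    (φp φm : FreeGroup (Fin n) →* G)
    (hφp : TwoConnected φp) (hφm : TwoConnected φm) :
    ∀ fold : Monoid.PushoutI (fun _ : Bool => φm) →* G,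
      fold = Monoid.PushoutI.lift (fun _ => MonoidHom.id G) φm (fun _ => rfl) →
      -- the product triple is a genuine element of `A_n`
      (FinitelyPresentable (Monoid.PushoutI (fun _ : Bool => φm)) ∧
        TwoConnected ((Monoid.PushoutI.of (φ := fun _ : Bool => φm) false).comp φp) ∧
        TwoConnected ((Monoid.PushoutI.of (φ := fun _ : Bool => φm) true).comp φp)) ∧
      -- the fold map is 2-connected, and with `φ₊` it is a homology cobordism
      -- from the product triple to the identity triple `(F_n, id, id)`
      TwoConnected fold ∧
      fold.comp ((Monoid.PushoutI.of (φ := fun _ : Bool => φm) false).comp φp) = φp ∧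
      fold.comp ((Monoid.PushoutI.of (φ := fun _ : Bool => φm) true).comp φp) = φp ∧
      φp.comp (MonoidHom.id (FreeGroup (Fin n))) = φp := by
  intro fold hfold
  have hG : H2Trivial G := hφp.2.h2Trivial
  have hP := h2Trivial_pushoutI φm hφm.1.injective hG
  have hfold_comp :
      ∀ b, fold.comp ((Monoid.PushoutI.of (φ := fun _ : Bool => φm) b).comp φp) = φp :=
    fun b => by ext; simp [hfold]
  have hab : ∀ b, Function.Bijective
      (Abelianization.map ((Monoid.PushoutI.of (φ := fun _ : Bool => φm) b).comp φp)) ∧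
      Function.Bijective (Abelianization.map fold) := fun b => by
    refine Function.Bijective.of_comp_of_surjective ?_ ?_
    · rw [← MonoidHom.coe_comp, Abelianization.map_comp, hfold_comp]
      exact hφp.1
    · rw [← Abelianization.map_comp, MonoidHom.coe_comp]
      exact (surjective_abelianizationMap_of φm hφm.1.surjective b).comp hφp.1.surjective
  have hfp : FinitelyPresentable (Monoid.PushoutI fun _ : Bool => φm) := by
    rw [finitelyPresentable_iff_isFinitelyPresented] at hGfp ⊢
    exact isFinitelyPresented_pushoutI φm
  exact ⟨⟨hfp, ⟨(hab false).1, hP.h2Surjective _⟩, (hab true).1, hP.h2Surjective _⟩,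
    ⟨(hab false).2, hG.h2Surjective _⟩, hfold_comp false, hfold_comp true, MonoidHom.comp_id φp⟩
end
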